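/- Let A and B be n×n Hermitian matrices, and let α = u + iv with v > 0. Then |Tr (A − αI)⁻¹ − Tr (B − αI)⁻¹| ≤ rank(A − B) / v. -/

import Mathlib

/-!
Write `A - B = ∑ λᵢ uᵢ uᵢᴴ` over its `rank (A - B)` nonzero eigenvalues and pass from `B` to `A`
one rank-one term at a time. For Hermitian `M` with resolvent `R = (M - α)⁻¹`, the
Sherman–Morrison formula gives
`Tr (M + t w wᴴ - α)⁻¹ - Tr R = -t wᴴR²w / (1 + t wᴴRw)`.
Since `Im (wᴴRw) = Im α ‖Rw‖²` and `|wᴴR²w| ≤ ‖Rᴴw‖ ‖Rw‖ = ‖Rw‖²`, the denominator has modulus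
at least `|t| Im α ‖Rw‖²`, so each step moves the trace by at most `1 / Im α`.
-/

open Matrix WithLp

theorem Complex.norm_mul_div_one_add_mul_le {t v c : ℝ} {r₁ r₂ : ℂ} (hv : 0 < v)
    (h₁ : r₁.im = v * c) (h₂ : ‖r₂‖ ≤ c) : ‖t * r₂ / (1 + t * r₁)‖ ≤ 1 / v := by
  have key : ‖(t : ℂ) * r₂‖ * v ≤ ‖1 + t * r₁‖ :=
    calc ‖(t : ℂ) * r₂‖ * v ≤ |t| * c * v := by
          rw [norm_mul, Complex.norm_real, Real.norm_eq_abs]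
          gcongr
      _ = |(1 + t * r₁).im| := by
          simp [h₁, abs_mul, abs_of_pos hv, abs_of_nonneg ((norm_nonneg _).trans h₂)]
          ring
      _ ≤ ‖1 + t * r₁‖ := Complex.abs_im_le_norm _
  rw [norm_div, le_div_iff₀ hv]
  rcases eq_or_ne (1 + t * r₁) 0 with h | h
  · simp [h]
  · rw [div_mul_eq_mul_div, div_le_one (norm_pos_iff.mpr h)]
    exact key

namespace Matrix

theorem isHermitian_ofReal_smul_vecMulVec_star {ι : Type*} (t : ℝ) (w : ι → ℂ) :
    ((t : ℂ) • vecMulVec w (star w)).IsHermitian :=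
  IsHermitian.smul (by rw [IsHermitian, conjTranspose_vecMulVec, star_star]) (Complex.conj_ofReal t)

variable {ι : Type*} [Fintype ι] [DecidableEq ι]

theorem trace_inv_add_vecMulVec_sub {𝕜 : Type*} [Field 𝕜] {K : Matrix ι ι 𝕜} {a b : ι → 𝕜}
    (hK : IsUnit K) (hK' : IsUnit (K + vecMulVec a b)) :
    (K + vecMulVec a b)⁻¹.trace - K⁻¹.trace
      = -(b ⬝ᵥ K⁻¹ *ᵥ (K⁻¹ *ᵥ a)) / (1 + b ⬝ᵥ K⁻¹ *ᵥ a) := by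
  set K' := K + vecMulVec a b
  set f := 1 + b ⬝ᵥ K⁻¹ *ᵥ a
  have hKK : K * K⁻¹ = 1 := mul_nonsing_inv _ ((isUnit_iff_isUnit_det K).mp hK)
  have hscale : f • K'⁻¹ *ᵥ a = K⁻¹ *ᵥ a := by
    have hK'K : K' *ᵥ (K⁻¹ *ᵥ a) = f • a := by
      rw [add_mulVec, mulVec_mulVec, hKK, one_mulVec, vecMulVec_mulVec, op_smul_eq_smul, add_smul,
        one_smul]
    rw [← mulVec_smul, ← hK'K, mulVec_mulVec, nonsing_inv_mul _ ((isUnit_iff_isUnit_det K').mp hK'),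
      one_mulVec]
  have hf : f ≠ 0 := by
    intro hf0
    have ha : a = 0 := by
      have := congrArg (K *ᵥ ·) hscale
      simpa [hf0, mulVec_mulVec, hKK] using this.symm
    simp [f, ha] at hf0
  have htrace : K'⁻¹.trace - K⁻¹.trace = -(b ⬝ᵥ K⁻¹ *ᵥ (K'⁻¹ *ᵥ a)) := by
    rw [← trace_sub, inv_sub_inv (iff_of_true hK' hK), show K - K' = -vecMulVec a b by simp [K'],
      mul_neg, neg_mul, trace_neg, trace_mul_cycle, mul_vecMulVec, trace_vecMulVec, dotProduct_comm,
      mulVec_mulVec]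
  rw [htrace, ← hscale, mulVec_smul, dotProduct_smul, smul_eq_mul]
  field_simp

namespace IsHermitian

section

variable {M : Matrix ι ι ℂ} (hM : M.IsHermitian) {α : ℂ}
include hM

theorem isUnit_sub_smul_one (hα : α.im ≠ 0) : IsUnit (M - α • 1) := by
  have hσ : α ∉ spectrum ℂ M := by
    rw [hM.spectrum_eq_image_range]
    rintro ⟨x, -, rfl⟩
    simp at hα
  rw [← neg_sub, IsUnit.neg_iff, ← Algebra.algebraMap_eq_smul_one]
  exact spectrum.notMem_iff.mp hσ

theorem conjTranspose_inv_sub_smul_one : (M - α • 1)⁻¹ᴴ = (M - star α • 1)⁻¹ := by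
  rw [conjTranspose_nonsing_inv, conjTranspose_sub, conjTranspose_smul, conjTranspose_one, hM.eq]

theorem im_star_dotProduct_inv_sub_smul_one_mulVec (hα : α.im ≠ 0) (w : ι → ℂ) :
    (star w ⬝ᵥ (M - α • 1)⁻¹ *ᵥ w).im = α.im * ‖toLp 2 ((M - α • 1)⁻¹ *ᵥ w)‖ ^ 2 := by
  set x := (M - α • 1)⁻¹ *ᵥ w
  -- with `w = (M - α) x` the form becomes `xᴴMx - conj α ‖x‖²`, and `xᴴMx` is real
  have hw : w = (M - α • 1) *ᵥ x := by
    rw [mulVec_mulVec, mul_nonsing_inv _ ((isUnit_iff_isUnit_det _).mp (hM.isUnit_sub_smul_one hα)),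
      one_mulVec]
  have hx : star x ⬝ᵥ x = (‖toLp 2 x‖ ^ 2 : ℂ) := by
    rw [dotProduct_comm, ← EuclideanSpace.inner_toLp_toLp]
    exact_mod_cast inner_self_eq_norm_sq_to_K _
  have hMx : (star x ⬝ᵥ M *ᵥ x).im = 0 := hM.im_star_dotProduct_mulVec_self x
  rw [hw, star_mulVec, ← dotProduct_mulVec, conjTranspose_sub, conjTranspose_smul,
    conjTranspose_one, hM.eq, sub_mulVec, dotProduct_sub, smul_mulVec, one_mulVec, dotProduct_smul,
    hx]
  simp [← Complex.ofReal_pow, hMx]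

theorem norm_conjTranspose_inv_sub_smul_one_mulVec (hα : α.im ≠ 0) (w : ι → ℂ) :
    ‖toLp 2 ((M - α • 1)⁻¹ᴴ *ᵥ w)‖ = ‖toLp 2 ((M - α • 1)⁻¹ *ᵥ w)‖ := by
  -- at `conj α` the resolvent is `Rᴴ` and the quadratic form is conjugated
  have h₁ := hM.im_star_dotProduct_inv_sub_smul_one_mulVec hα w
  have h₂ := hM.im_star_dotProduct_inv_sub_smul_one_mulVec (α := star α) (by simpa using hα) w
  rw [← hM.conjTranspose_inv_sub_smul_one, star_dotProduct, star_mulVec,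
    conjTranspose_conjTranspose, ← dotProduct_mulVec, Complex.star_def, Complex.conj_im, h₁,
    Complex.conj_im] at h₂
  have hsq : ‖toLp 2 ((M - α • 1)⁻¹ᴴ *ᵥ w)‖ ^ 2 = ‖toLp 2 ((M - α • 1)⁻¹ *ᵥ w)‖ ^ 2 := by
    apply mul_left_cancel₀ hα
    linarith
  exact (sq_eq_sq₀ (norm_nonneg _) (norm_nonneg _)).mp hsq

theorem norm_star_dotProduct_inv_sub_smul_one_sq_mulVec_le (hα : α.im ≠ 0) (w : ι → ℂ) :
    ‖star w ⬝ᵥ (M - α • 1)⁻¹ *ᵥ ((M - α • 1)⁻¹ *ᵥ w)‖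
      ≤ ‖toLp 2 ((M - α • 1)⁻¹ *ᵥ w)‖ ^ 2 := by
  set R := (M - α • 1)⁻¹
  have hinner : star w ⬝ᵥ R *ᵥ (R *ᵥ w) = inner ℂ (toLp 2 (Rᴴ *ᵥ w)) (toLp 2 (R *ᵥ w)) := by
    rw [dotProduct_mulVec, EuclideanSpace.inner_toLp_toLp, star_mulVec, conjTranspose_conjTranspose,
      dotProduct_comm]
  rw [hinner]
  exact (norm_inner_le_norm _ _).trans_eq
    (by rw [hM.norm_conjTranspose_inv_sub_smul_one_mulVec hα w, sq])

theorem norm_trace_inv_add_smul_vecMulVec_sub_le (hα : 0 < α.im) (t : ℝ) (w : ι → ℂ) :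
    ‖(M + (t : ℂ) • vecMulVec w (star w) - α • 1)⁻¹.trace - (M - α • 1)⁻¹.trace‖ ≤ 1 / α.im := by
  have hshift : M + (t : ℂ) • vecMulVec w (star w) - α • 1
      = (M - α • 1) + vecMulVec ((t : ℂ) • w) (star w) := by
    rw [smul_vecMulVec]
    abel
  have hK' := hshift ▸
    (hM.add (isHermitian_ofReal_smul_vecMulVec_star t w)).isUnit_sub_smul_one hα.ne'
  rw [hshift, trace_inv_add_vecMulVec_sub (hM.isUnit_sub_smul_one hα.ne') hK', mulVec_smul, mulVec_smul,
    dotProduct_smul, dotProduct_smul, smul_eq_mul, smul_eq_mul, neg_div, norm_neg]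
  exact Complex.norm_mul_div_one_add_mul_le hα
    (hM.im_star_dotProduct_inv_sub_smul_one_mulVec hα.ne' w)
    (hM.norm_star_dotProduct_inv_sub_smul_one_sq_mulVec_le hα.ne' w)

end

theorem norm_trace_inv_add_sum_smul_vecMulVec_sub_le {κ : Type*} {M : Matrix ι ι ℂ}
    (hM : M.IsHermitian) {α : ℂ} (hα : 0 < α.im) (s : Finset κ) (d : κ → ℝ) (u : κ → ι → ℂ) :
    ‖(M + ∑ i ∈ s, (d i : ℂ) • vecMulVec (u i) (star (u i)) - α • 1)⁻¹.trace
      - (M - α • 1)⁻¹.trace‖ ≤ s.card / α.im := by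
  classical
  induction s using Finset.induction_on generalizing M with
  | empty => simp
  | insert a s ha ih =>
    set M' := M + (d a : ℂ) • vecMulVec (u a) (star (u a))
    have hM' : M'.IsHermitian := hM.add (isHermitian_ofReal_smul_vecMulVec_star _ _)
    rw [Finset.sum_insert ha, ← add_assoc, Finset.card_insert_of_notMem ha, Nat.cast_succ, add_div]
    exact (norm_sub_le_norm_sub_add_norm_sub _ (M' - α • 1)⁻¹.trace _).trans
      (add_le_add (ih hM') (hM.norm_trace_inv_add_smul_vecMulVec_sub_le hα _ _))

end IsHermitian

theorem IsHermitian.eq_sum_eigenvalues_smul_vecMulVec {𝕜 : Type*} [RCLike 𝕜] {A : Matrix ι ι 𝕜}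
    (hA : A.IsHermitian) :
    A = ∑ i, (hA.eigenvalues i : 𝕜) •
      vecMulVec ⇑(hA.eigenvectorBasis i) (star ⇑(hA.eigenvectorBasis i)) := by
  refine ext_iff_mulVec.mpr fun x => ?_
  have hx : ∑ i, inner 𝕜 (hA.eigenvectorBasis i) (toLp 2 x) • ⇑(hA.eigenvectorBasis i) = x := by
    simpa using congrArg ofLp (hA.eigenvectorBasis.sum_repr' (toLp 2 x))
  conv_lhs => rw [← hx]
  simp only [mulVec_sum, mulVec_smul, hA.mulVec_eigenvectorBasis, algebraMap_smul, sum_mulVec,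
    smul_mulVec, vecMulVec_mulVec, op_smul_eq_smul]
  refine Finset.sum_congr rfl fun i _ => ?_
  rw [EuclideanSpace.inner_eq_star_dotProduct, dotProduct_comm, smul_comm]

end Matrix

/-- Resolvent trace comparison: for Hermitian `A`, `B` and `α` with `Im α = v > 0`,
`|Tr (A − αI)⁻¹ − Tr (B − αI)⁻¹| ≤ rank(A − B) / v`. -/
theorem trace_resolvent_diff_le_rank
    (n : ℕ) (A B : Matrix (Fin n) (Fin n) ℂ)
    (hA : A.IsHermitian) (hB : B.IsHermitian)
    (α : ℂ) (hv : 0 < α.im) :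
    ‖(A - α • (1 : Matrix (Fin n) (Fin n) ℂ))⁻¹.trace
        - (B - α • (1 : Matrix (Fin n) (Fin n) ℂ))⁻¹.trace‖
      ≤ ((A - B).rank : ℝ) / α.im := by
  have hC : (A - B).IsHermitian := hA.sub hB
  have hA_eq : A = B + ∑ i with hC.eigenvalues i ≠ 0, (hC.eigenvalues i : ℂ) •
      vecMulVec ⇑(hC.eigenvectorBasis i) (star ⇑(hC.eigenvectorBasis i)) := by
    rw [Finset.sum_filter_of_ne (p := fun i => hC.eigenvalues i ≠ 0)
        fun i _ h hi => h (by rw [hi, Complex.ofReal_zero, zero_smul])]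
    exact (add_sub_cancel B A).symm.trans (congrArg (B + ·) hC.eq_sum_eigenvalues_smul_vecMulVec)
  have hrank : (A - B).rank = (Finset.univ.filter fun i => hC.eigenvalues i ≠ 0).card := by
    rw [hC.rank_eq_card_non_zero_eigs, Fintype.card_subtype]
  rw [hrank]
  conv_lhs => rw [hA_eq]
  exact hB.norm_trace_inv_add_sum_smul_vecMulVec_sub_le hv _ _ _
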